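/- The identity ∑_{n=1}^∞ Γ((n+1)/2)/Γ(n) · z^{n-1} = 1 + (√π/2) z e^{z²/4}(1 + erf(z/2)) holds for all real z. -/

import Mathlib

/-!
Since `Γ((n + 2) / 2) = 2 ∫₀^∞ s^(n+1) e^(-s²) ds`, summing the exponential series under the
integral (dominated by the same series at `|z|`) turns the left side into
`∫₀^∞ 2 s e^(z s - s²) ds`. Completing the square, `z s - s² = z² / 4 - (s - z / 2)²`, so
`(√π / 2) z e^(z²/4) erf(s - z / 2) - e^(z s - s²)` is a primitive of the integrand, and the
value follows from its limits at `0` and `∞`.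
-/

/-- The error function erf(z) = (2/√π) ∫₀^z e^{-t²} dt. -/
noncomputable def erf (z : ℝ) : ℝ := 2 / Real.sqrt Real.pi * ∫ t in (0:ℝ)..z, Real.exp (-t ^ 2)

open Real MeasureTheory Set Filter Topology Nat

lemma hasDerivAt_erf (x : ℝ) : HasDerivAt erf (2 / √π * exp (-x ^ 2)) x :=
  ((continuous_exp.comp (continuous_pow 2).neg).integral_hasStrictDerivAt 0 x).hasDerivAt
    |>.const_mul _

lemma erf_neg (x : ℝ) : erf (-x) = -erf x := by
  have h := intervalIntegral.integral_comp_neg (a := 0) (b := x) fun t => exp (-t ^ 2)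
  simp only [neg_sq, neg_zero] at h
  rw [erf, erf, intervalIntegral.integral_symm, ← h, mul_neg]

lemma tendsto_erf_atTop : Tendsto erf atTop (𝓝 1) := by
  have hint : IntegrableOn (fun t : ℝ => exp (-t ^ 2)) (Ioi 0) := by
    simpa using (integrable_exp_neg_mul_sq one_pos).integrableOn
  have hlim := (intervalIntegral_tendsto_integral_Ioi 0 hint tendsto_id).const_mul (2 / √π)
  have hval : ∫ t in Ioi (0 : ℝ), exp (-t ^ 2) = √π / 2 := by
    simpa using integral_gaussian_Ioi 1
  have hπ : √π ≠ 0 := (sqrt_pos.2 pi_pos).ne'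
  rwa [hval, div_mul_div_cancel₀ hπ, div_self two_ne_zero] at hlim

lemma integral_Ioi_pow_mul_exp_neg_sq (n : ℕ) :
    ∫ s in Ioi (0 : ℝ), s ^ n * exp (-s ^ 2) = Gamma ((n + 1) / 2) / 2 := by
  have h := integral_rpow_mul_exp_neg_rpow two_pos (neg_one_lt_zero.trans_le n.cast_nonneg)
  simp only [rpow_natCast, rpow_two, one_div] at h
  rw [h]
  ring

lemma integrableOn_Ioi_pow_mul_exp_neg_sq (n : ℕ) :
    IntegrableOn (fun s : ℝ => s ^ n * exp (-s ^ 2)) (Ioi 0) := by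
  simpa using integrableOn_rpow_mul_exp_neg_mul_sq one_pos (neg_one_lt_zero.trans_le n.cast_nonneg)

lemma integrable_mul_exp_mul_sub_sq (a : ℝ) :
    Integrable fun s : ℝ => s * exp (a * s - s ^ 2) := by
  have h := (((integrable_mul_exp_neg_mul_sq one_pos).add
    ((integrable_exp_neg_mul_sq one_pos).const_mul (a / 2))).comp_sub_right (a / 2)).const_mul
    (exp (a ^ 2 / 4))
  refine h.congr (Eventually.of_forall fun s => ?_)
  simp only [Pi.add_apply]
  rw [← add_mul, ← mul_assoc, mul_comm _ (_ + _), mul_assoc, ← exp_add]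
  ring_nf

lemma hasSum_pow_mul_exp_neg_sq (y s : ℝ) :
    HasSum (fun n : ℕ => 2 * y ^ n / n ! * (s ^ (n + 1) * exp (-s ^ 2)))
      (2 * s * exp (y * s - s ^ 2)) := by
  have h := (NormedSpace.expSeries_div_hasSum_exp (y * s)).mul_left (2 * s * exp (-s ^ 2))
  rw [← exp_eq_exp_ℝ] at h
  rw [sub_eq_neg_add, exp_add, ← mul_assoc]
  exact h.congr_fun fun n => by ring

lemma integral_Ioi_const_mul_pow_succ_mul_exp_neg_sq (z : ℝ) (n : ℕ) :
    ∫ s in Ioi (0 : ℝ), 2 * z ^ n / n ! * (s ^ (n + 1) * exp (-s ^ 2))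
      = Gamma ((n + 2) / 2) / Gamma (n + 1) * z ^ n := by
  rw [integral_const_mul, integral_Ioi_pow_mul_exp_neg_sq, Gamma_nat_eq_factorial, Nat.cast_succ,
    add_assoc, one_add_one_eq_two]
  ring

lemma hasSum_gamma_div_gamma_mul_pow (z : ℝ) :
    HasSum (fun n : ℕ => Gamma ((n + 2) / 2) / Gamma (n + 1) * z ^ n)
      (∫ s in Ioi (0 : ℝ), 2 * s * exp (z * s - s ^ 2)) := by
  simp_rw [← integral_Ioi_const_mul_pow_succ_mul_exp_neg_sq]
  refine hasSum_integral_of_dominated_convergence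
    (fun n s => 2 * |z| ^ n / n ! * (s ^ (n + 1) * exp (-s ^ 2)))
    (fun n => ((integrableOn_Ioi_pow_mul_exp_neg_sq _).const_mul _).aestronglyMeasurable)
    (fun n => ?_) (ae_of_all _ fun s => (hasSum_pow_mul_exp_neg_sq |z| s).summable) ?_
    (ae_of_all _ fun s => hasSum_pow_mul_exp_neg_sq z s)
  · filter_upwards [ae_restrict_mem measurableSet_Ioi] with s (hs : 0 < s)
    simp [abs_of_pos hs]
  · simp_rw [(hasSum_pow_mul_exp_neg_sq |z| _).tsum_eq, mul_assoc]
    exact ((integrable_mul_exp_mul_sub_sq |z|).const_mul 2).integrableOn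

lemma hasDerivAt_erf_sub_exp_mul_sub_sq (z s : ℝ) :
    HasDerivAt (fun s => √π / 2 * z * exp (z ^ 2 / 4) * erf (s - z / 2) - exp (z * s - s ^ 2))
      (2 * s * exp (z * s - s ^ 2)) s := by
  have herf := ((hasDerivAt_erf (s - z / 2)).comp s ((hasDerivAt_id s).sub_const (z / 2))).const_mul
    (√π / 2 * z * exp (z ^ 2 / 4))
  have hexp := (((hasDerivAt_id s).const_mul z).sub (hasDerivAt_pow 2 s)).exp
  refine (herf.sub hexp).congr_deriv ?_
  have hsq : exp (z ^ 2 / 4) * exp (-(s - z / 2) ^ 2) = exp (z * s - s ^ 2) := by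
    rw [← exp_add]
    ring_nf
  have hπ : √π ≠ 0 := (sqrt_pos.2 pi_pos).ne'
  simp only [id, Pi.sub_apply, Nat.cast_ofNat, pow_one, mul_one, Nat.add_one_sub_one]
  rw [← hsq]
  field_simp
  ring

lemma tendsto_exp_mul_sub_sq_atTop (z : ℝ) :
    Tendsto (fun s => exp (z * s - s ^ 2)) atTop (𝓝 0) :=
  tendsto_exp_atBot.comp <| (tendsto_id.atTop_mul_atBot₀ (tendsto_atBot_add_const_left _ z
    tendsto_neg_atTop_atBot)).congr fun s => by rw [id_eq]; ring

lemma integral_Ioi_two_mul_exp_mul_sub_sq (z : ℝ) :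
    ∫ s in Ioi (0 : ℝ), 2 * s * exp (z * s - s ^ 2)
      = 1 + √π / 2 * z * exp (z ^ 2 / 4) * (1 + erf (z / 2)) := by
  have herf : Tendsto (fun s => erf (s - z / 2)) atTop (𝓝 1) :=
    tendsto_erf_atTop.comp (tendsto_atTop_add_const_right _ _ tendsto_id)
  have hlim :=
    (herf.const_mul (√π / 2 * z * exp (z ^ 2 / 4))).sub (tendsto_exp_mul_sub_sq_atTop z)
  have hint : IntegrableOn (fun s => 2 * s * exp (z * s - s ^ 2)) (Ioi 0) := by
    simpa only [mul_assoc] using ((integrable_mul_exp_mul_sub_sq z).const_mul 2).integrableOn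
  rw [integral_Ioi_of_hasDerivAt_of_tendsto' (fun s _ => hasDerivAt_erf_sub_exp_mul_sub_sq z s) hint
    hlim]
  simp only [mul_zero, zero_sub, sub_zero, erf_neg, ne_eq, OfNat.ofNat_ne_zero, not_false_eq_true,
    zero_pow, sub_self, exp_zero]
  ring

/-- ∑_{n≥1} Γ((n+1)/2)/Γ(n) · z^{n-1} = 1 + (√π/2) z e^{z²/4}(1 + erf(z/2)) for all real z.
(The sum is reindexed by n ↦ n+1, so it runs over n = 1, 2, 3, ….) -/
theorem stmt3 (z : ℝ) :
    ∑' n : ℕ, Real.Gamma (((n : ℝ) + 2) / 2) / Real.Gamma ((n : ℝ) + 1) * z ^ n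
      = 1 + Real.sqrt Real.pi / 2 * z * Real.exp (z ^ 2 / 4) * (1 + erf (z / 2)) := by
  rw [(hasSum_gamma_div_gamma_mul_pow z).tsum_eq, integral_Ioi_two_mul_exp_mul_sub_sq]
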